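/- arXiv:2511.23206 — 3 statements merged into one kernel-verified Lean document; each statement's English description precedes it below -/
import Mathlib

section
/- Let C be a category with pullbacks of split epimorphisms along split epimorphisms, and let M be a class of spans in C that is closed under the kernel pair construction and contains the span part of every local product. Assume every directed kite whose direction span belongs to M is admissible. Then a diagram (e1 : A → E, p1 : E → A, e2 : C → E, p2 : E → C) is a local product if and only if the following hold: (i) p1∘e1 = 1_A and p2∘e2 = 1_C; (ii) (e1∘p1)∘(e2∘p2) = (e2∘p2)∘(e1∘p1); (iii) the pair (p1, p2) is jointly monic; (iv) the span (E, p1, p2) belongs to M; and (v) the pullback of e1 and e2 exists. -/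
open CategoryTheory

universe v u

section Defs

variable {C : Type u} [Category.{v} C]

/-- A pair of morphisms with common domain is jointly monic. -/
def JointlyMonic {E A B : C} (p1 : E ⟶ A) (p2 : E ⟶ B) : Prop :=
  ∀ {Z : C} (u v : Z ⟶ E), u ≫ p1 = v ≫ p1 → u ≫ p2 = v ≫ p2 → u = v

/-- `(P, p1, p2)` is a pullback of `f` and `g`. -/
structure IsPb {P A B X : C} (p1 : P ⟶ A) (p2 : P ⟶ B) (f : A ⟶ X) (g : B ⟶ X) : Prop where
  comm : p1 ≫ f = p2 ≫ g
  univ : ∀ {Z : C} (a : Z ⟶ A) (b : Z ⟶ B), a ≫ f = b ≫ g →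
    ∃! l : Z ⟶ P, l ≫ p1 = a ∧ l ≫ p2 = b

/-- The data of a span `(D, d, c)` with `d : D ⟶ D0` and `c : D ⟶ D1`. -/
structure SpanData (C : Type u) [Category.{v} C] where
  D : C
  D0 : C
  D1 : C
  d : D ⟶ D0
  c : D ⟶ D1

/-- The morphism `d` admits a kernel pair. -/
def HasKernelPair {D D0 : C} (d : D ⟶ D0) : Prop :=
  ∃ (K : C) (k1 k2 : K ⟶ D), IsPb k1 k2 d d

/-- The (raw) data of a directed kite. -/
structure DiKite (C : Type u) [Category.{v} C] where
  A : C
  B : C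
  Cc : C
  D : C
  D0 : C
  D1 : C
  f : A ⟶ B
  r : B ⟶ A
  g : Cc ⟶ B
  s : B ⟶ Cc
  α : A ⟶ D
  β : B ⟶ D
  γ : Cc ⟶ D
  d : D ⟶ D0
  c : D ⟶ D1

/-- The directed kite axioms. -/
def DiKite.IsKite (K : DiKite C) : Prop :=
  K.r ≫ K.f = 𝟙 K.B ∧ K.s ≫ K.g = 𝟙 K.B ∧
  K.r ≫ K.α = K.β ∧ K.s ≫ K.γ = K.β ∧
  K.α ≫ K.d = K.f ≫ K.β ≫ K.d ∧
  K.g ≫ K.β ≫ K.c = K.γ ≫ K.c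

/-- The direction span of a directed kite. -/
def DiKite.spanPart (K : DiKite C) : SpanData C := ⟨K.D, K.D0, K.D1, K.d, K.c⟩

/-- `m` is a multiplication for the directed kite `K`,
relative to pullback projections `π1`, `π2` of `K.f`, `K.g`. -/
def IsMult (K : DiKite C) {P : C} (π1 : P ⟶ K.A) (π2 : P ⟶ K.Cc) (m : P ⟶ K.D) : Prop :=
  (∀ e1 : K.A ⟶ P, e1 ≫ π1 = 𝟙 K.A → e1 ≫ π2 = K.f ≫ K.s → e1 ≫ m = K.α) ∧
  (∀ e2 : K.Cc ⟶ P, e2 ≫ π1 = K.g ≫ K.r → e2 ≫ π2 = 𝟙 K.Cc → e2 ≫ m = K.γ) ∧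
  m ≫ K.d = π2 ≫ K.γ ≫ K.d ∧
  m ≫ K.c = π1 ≫ K.α ≫ K.c

/-- The directed kite `K` is admissible: it has exactly one multiplication. -/
def DiKite.Admissible (K : DiKite C) : Prop :=
  ∀ {P : C} (π1 : P ⟶ K.A) (π2 : P ⟶ K.Cc), IsPb π1 π2 K.f K.g →
    ∃! m : P ⟶ K.D, IsMult K π1 π2 m

/-- `(e1, p1, e2, p2)` is a local product. -/
def IsLocalProduct {A Cc E : C} (e1 : A ⟶ E) (p1 : E ⟶ A) (e2 : Cc ⟶ E) (p2 : E ⟶ Cc) :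
    Prop :=
  ∃ (B : C) (f : A ⟶ B) (r : B ⟶ A) (g : Cc ⟶ B) (s : B ⟶ Cc),
    r ≫ f = 𝟙 B ∧ s ≫ g = 𝟙 B ∧ IsPb p1 p2 f g ∧
    e1 ≫ p1 = 𝟙 A ∧ e1 ≫ p2 = f ≫ s ∧ e2 ≫ p1 = g ≫ r ∧ e2 ≫ p2 = 𝟙 Cc

/-- `(T, dom, mid, cod)` is the object of compatible triples of the span `(D, d, c)`
(the kernel pair construction). -/
structure IsTripleObj {D D0 D1 : C} (d : D ⟶ D0) (c : D ⟶ D1) {T : C}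
    (dom mid cod : T ⟶ D) : Prop where
  d_dom : dom ≫ d = mid ≫ d
  c_mid : mid ≫ c = cod ≫ c
  univ : ∀ {Z : C} (x y z : Z ⟶ D), x ≫ d = y ≫ d → y ≫ c = z ≫ c →
    ∃! l : Z ⟶ T, l ≫ dom = x ∧ l ≫ mid = y ∧ l ≫ cod = z

/-- `(Bx, q1, q2, q3, q4)` is the box object of the span `(D, d, c)`. -/
structure IsBoxObj {D D0 D1 : C} (d : D ⟶ D0) (c : D ⟶ D1) {Bx : C}
    (q1 q2 q3 q4 : Bx ⟶ D) : Prop where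
  h12 : q1 ≫ d = q2 ≫ d
  h23 : q2 ≫ c = q3 ≫ c
  h34 : q3 ≫ d = q4 ≫ d
  h41 : q4 ≫ c = q1 ≫ c
  univ : ∀ {Z : C} (x y z w : Z ⟶ D), x ≫ d = y ≫ d → y ≫ c = z ≫ c →
    z ≫ d = w ≫ d → w ≫ c = x ≫ c →
    ∃! l : Z ⟶ Bx, l ≫ q1 = x ∧ l ≫ q2 = y ∧ l ≫ q3 = z ∧ l ≫ q4 = w

/-- A natural pregroupoid structure on the span `(D, d, c)`. -/
structure PregroupoidStr {D D0 D1 : C} (d : D ⟶ D0) (c : D ⟶ D1) where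
  p : ∀ {Z : C} (x y z : Z ⟶ D), x ≫ d = y ≫ d → y ≫ c = z ≫ c → (Z ⟶ D)
  natural : ∀ {Z' Z : C} (h : Z' ⟶ Z) (x y z : Z ⟶ D)
    (hd : x ≫ d = y ≫ d) (hc : y ≫ c = z ≫ c)
    (hd' : (h ≫ x) ≫ d = (h ≫ y) ≫ d) (hc' : (h ≫ y) ≫ c = (h ≫ z) ≫ c),
    p (h ≫ x) (h ≫ y) (h ≫ z) hd' hc' = h ≫ p x y z hd hc
  comp_d : ∀ {Z : C} (x y z : Z ⟶ D) (hd : x ≫ d = y ≫ d) (hc : y ≫ c = z ≫ c),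
    p x y z hd hc ≫ d = z ≫ d
  comp_c : ∀ {Z : C} (x y z : Z ⟶ D) (hd : x ≫ d = y ≫ d) (hc : y ≫ c = z ≫ c),
    p x y z hd hc ≫ c = x ≫ c
  p_xyy : ∀ {Z : C} (x y : Z ⟶ D) (hd : x ≫ d = y ≫ d) (hc : y ≫ c = y ≫ c),
    p x y y hd hc = x
  p_yyz : ∀ {Z : C} (y z : Z ⟶ D) (hd : y ≫ d = y ≫ d) (hc : y ≫ c = z ≫ c),
    p y y z hd hc = z

/-- Associativity of a pregroupoid structure. -/
def PregroupoidStr.Assoc {D D0 D1 : C} {d : D ⟶ D0} {c : D ⟶ D1}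
    (P : PregroupoidStr d c) : Prop :=
  ∀ {Z : C} (u v x y z : Z ⟶ D)
    (huv : u ≫ d = v ≫ d) (hvx : v ≫ c = x ≫ c)
    (hxy : x ≫ d = y ≫ d) (hyz : y ≫ c = z ≫ c)
    (h1 : v ≫ c = (P.p x y z hxy hyz) ≫ c)
    (h2 : (P.p u v x huv hvx) ≫ d = y ≫ d),
    P.p u v (P.p x y z hxy hyz) huv h1 = P.p (P.p u v x huv hvx) y z h2 hyz

end Defs

/-- `C` has pullbacks of split epimorphisms along split epimorphisms. -/
def HasPbSplit (C : Type u) [Category.{v} C] : Prop :=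
  ∀ {A B Cc : C} (f : A ⟶ B) (r : B ⟶ A) (g : Cc ⟶ B) (s : B ⟶ Cc),
    r ≫ f = 𝟙 B → s ≫ g = 𝟙 B →
    ∃ (P : C) (p1 : P ⟶ A) (p2 : P ⟶ Cc), IsPb p1 p2 f g

/-- The class `M` contains the span part of every local product. -/
def ContainsLocalProducts {C : Type u} [Category.{v} C] (M : Set (SpanData C)) : Prop :=
  ∀ {A B Cc E : C} (f : A ⟶ B) (r : B ⟶ A) (g : Cc ⟶ B) (s : B ⟶ Cc)
    (p1 : E ⟶ A) (p2 : E ⟶ Cc),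
    r ≫ f = 𝟙 B → s ≫ g = 𝟙 B → IsPb p1 p2 f g →
    SpanData.mk E A Cc p1 p2 ∈ M

/-- The class `M` is closed under the kernel pair construction. -/
def ClosedUnderKP {C : Type u} [Category.{v} C] (M : Set (SpanData C)) : Prop :=
  ∀ S ∈ M, ∀ {T : C} (dom mid cod : T ⟶ S.D),
    IsTripleObj S.d S.c dom mid cod → SpanData.mk T S.D S.D dom cod ∈ M


private lemma jm_of_isPb {C : Type u} [Category.{v} C] {P A B X : C}
    {p1 : P ⟶ A} {p2 : P ⟶ B} {f : A ⟶ X} {g : B ⟶ X}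
    (h : IsPb p1 p2 f g) : JointlyMonic p1 p2 := by
  intro Z u v h1 h2
  obtain ⟨l, hl, hu⟩ := h.univ (u ≫ p1) (u ≫ p2)
    (by rw [Category.assoc, Category.assoc, h.comm])
  rw [hu u ⟨rfl, rfl⟩, hu v ⟨h1.symm, h2.symm⟩]

private lemma isPb_swap {C : Type u} [Category.{v} C] {P A B X : C}
    {p1 : P ⟶ A} {p2 : P ⟶ B} {f : A ⟶ X} {g : B ⟶ X}
    (h : IsPb p1 p2 f g) : IsPb p2 p1 g f where
  comm := h.comm.symm
  univ := by
    intro Z a b hab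
    obtain ⟨l, ⟨h1, h2⟩, hu⟩ := h.univ b a hab.symm
    exact ⟨l, ⟨h2, h1⟩, fun y hy => hu y ⟨hy.2, hy.1⟩⟩

theorem statement17 {C : Type u} [Category.{v} C] (hPb : HasPbSplit C)
    (M : Set (SpanData C)) (hKP : ClosedUnderKP M) (hLP : ContainsLocalProducts M)
    (hAdm : ∀ K : DiKite C, K.IsKite → K.spanPart ∈ M → K.Admissible) :
    ∀ {A Cc E : C} (e1 : A ⟶ E) (p1 : E ⟶ A) (e2 : Cc ⟶ E) (p2 : E ⟶ Cc),
      IsLocalProduct e1 p1 e2 p2 ↔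
        (e1 ≫ p1 = 𝟙 A ∧ e2 ≫ p2 = 𝟙 Cc ∧
         (p2 ≫ e2) ≫ (p1 ≫ e1) = (p1 ≫ e1) ≫ (p2 ≫ e2) ∧
         JointlyMonic p1 p2 ∧
         SpanData.mk E A Cc p1 p2 ∈ M ∧
         ∃ (Q : C) (q1 : Q ⟶ A) (q2 : Q ⟶ Cc), IsPb q1 q2 e1 e2) := by
  intro A Cc E e1 p1 e2 p2
  constructor
  · rintro ⟨B, f, r, g, s, hrf, hsg, hpb, h11, h12, h21, h22⟩
    have jm : JointlyMonic p1 p2 := jm_of_isPb hpb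
    refine ⟨h11, h22, ?_, jm, hLP f r g s p1 p2 hrf hsg hpb, B, r, s, ?_⟩
    · apply jm
      · simp only [Category.assoc, h11, h21, h12, h22, Category.comp_id,
          reassoc_of% h11, reassoc_of% h21, reassoc_of% h12, reassoc_of% h22,
          reassoc_of% hrf, reassoc_of% hsg, reassoc_of% hpb.comm]
      · simp only [Category.assoc, h11, h21, h12, h22, Category.comp_id,
          reassoc_of% h11, reassoc_of% h21, reassoc_of% h12, reassoc_of% h22,
          reassoc_of% hrf, reassoc_of% hsg, reassoc_of% hpb.comm]
    · constructor
      · apply jm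
        · simp only [Category.assoc, h11, h21, h12, h22, Category.comp_id,
            reassoc_of% hrf, reassoc_of% hsg]
        · simp only [Category.assoc, h11, h21, h12, h22, Category.comp_id,
            reassoc_of% hrf, reassoc_of% hsg]
      · intro Z a b hab
        have h1 : a ≫ f ≫ s = b := by
          calc a ≫ f ≫ s = a ≫ e1 ≫ p2 := by rw [h12]
            _ = (b ≫ e2) ≫ p2 := by rw [← Category.assoc, hab]
            _ = b := by rw [Category.assoc, h22, Category.comp_id]
        have h2 : b ≫ g ≫ r = a := by
          calc b ≫ g ≫ r = b ≫ e2 ≫ p1 := by rw [h21]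
            _ = (a ≫ e1) ≫ p1 := by rw [← Category.assoc, hab]
            _ = a := by rw [Category.assoc, h11, Category.comp_id]
        have h3 : a ≫ f = b ≫ g := by
          calc a ≫ f = (a ≫ f ≫ s) ≫ g := by
                simp only [Category.assoc, hsg, Category.comp_id]
            _ = b ≫ g := by rw [h1]
        have h4 : a ≫ f ≫ r = a := by
          calc a ≫ f ≫ r = (a ≫ f ≫ s) ≫ g ≫ r := by
                simp only [Category.assoc, reassoc_of% hsg]
            _ = b ≫ g ≫ r := by rw [h1]
            _ = a := h2
        refine ⟨a ≫ f, ⟨by rw [Category.assoc, h4], ?_⟩, ?_⟩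
        · rw [Category.assoc, h1]
        · rintro y ⟨hy1, hy2⟩
          calc y = (y ≫ s) ≫ g := by
                simp only [Category.assoc, hsg, Category.comp_id]
            _ = b ≫ g := by rw [hy2]
            _ = a ≫ f := h3.symm
  · rintro ⟨h11, h22, hcomm, jm, hM, Q, q1, q2, hQ⟩
    have hq : q1 ≫ e1 = q2 ≫ e2 := hQ.comm
    have jmQ : JointlyMonic q1 q2 := jm_of_isPb hQ
    have hc' : p2 ≫ e2 ≫ p1 ≫ e1 = p1 ≫ e1 ≫ p2 ≫ e2 := by
      simpa only [Category.assoc] using hcomm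
    have hq21 : q2 ≫ e2 ≫ p1 = q1 := by
      rw [← Category.assoc, ← hq, Category.assoc, h11, Category.comp_id]
    have hq12 : q1 ≫ e1 ≫ p2 = q2 := by
      rw [← Category.assoc, hq, Category.assoc, h22, Category.comp_id]
    -- construct f : A ⟶ Q and g : Cc ⟶ Q
    have hfw : (e1 ≫ p2 ≫ e2 ≫ p1) ≫ e1 = (e1 ≫ p2) ≫ e2 := by
      apply jm
      · simp only [Category.assoc, h11, Category.comp_id]
      · simp only [Category.assoc, reassoc_of% hc', reassoc_of% h11, h22,
          Category.comp_id, h11]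
    obtain ⟨f, ⟨hf1, hf2⟩, -⟩ := hQ.univ (e1 ≫ p2 ≫ e2 ≫ p1) (e1 ≫ p2) hfw
    have hgw : (e2 ≫ p1) ≫ e1 = (e2 ≫ p1 ≫ e1 ≫ p2) ≫ e2 := by
      apply jm
      · simp only [Category.assoc, reassoc_of% hc'.symm, reassoc_of% h22, h11,
          Category.comp_id]
      · simp only [Category.assoc, h22, Category.comp_id]
    obtain ⟨g, ⟨hg1, hg2⟩, -⟩ := hQ.univ (e2 ≫ p1) (e2 ≫ p1 ≫ e1 ≫ p2) hgw
    have hq1f : q1 ≫ f = 𝟙 Q := by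
      apply jmQ
      · simp only [Category.assoc, hf1, reassoc_of% hq12, hq21, Category.id_comp]
      · simp only [Category.assoc, hf2, hq12, Category.id_comp]
    have hq2g : q2 ≫ g = 𝟙 Q := by
      apply jmQ
      · simp only [Category.assoc, hg1, hq21, Category.id_comp]
      · simp only [Category.assoc, hg2, reassoc_of% hq21, hq12, Category.id_comp]
    have hfg : p1 ≫ f = p2 ≫ g := by
      apply jmQ
      · simp only [Category.assoc, hf1, hg1, reassoc_of% hc'.symm, h11,
          Category.comp_id]
      · simp only [Category.assoc, hf2, hg2, reassoc_of% hc', h22,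
          Category.comp_id]
    -- kernel pairs and the triple object
    obtain ⟨K1, a1, a2, hK1⟩ := hPb p1 e1 p1 e1 h11 h11
    obtain ⟨δ1, ⟨hδ1a, hδ1b⟩, -⟩ := hK1.univ (𝟙 E) (𝟙 E) rfl
    obtain ⟨K2, b1, b2, hK2⟩ := hPb p2 e2 p2 e2 h22 h22
    obtain ⟨δ2, ⟨hδ2a, hδ2b⟩, -⟩ := hK2.univ (𝟙 E) (𝟙 E) rfl
    obtain ⟨T, t1, t2, hT'⟩ := hPb a2 δ1 b1 δ2 hδ1b hδ2a
    have hT : IsTripleObj p1 p2 (t1 ≫ a1) (t1 ≫ a2) (t2 ≫ b2) := by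
      refine ⟨?_, ?_, ?_⟩
      · simp only [Category.assoc, hK1.comm]
      · rw [hT'.comm, Category.assoc, Category.assoc, hK2.comm]
      · intro Z x y z hxy hyz
        obtain ⟨u, ⟨hu1, hu2⟩, huu⟩ := hK1.univ x y hxy
        obtain ⟨v, ⟨hv1, hv2⟩, hvv⟩ := hK2.univ y z hyz
        obtain ⟨l, ⟨hl1, hl2⟩, hll⟩ := hT'.univ u v (by rw [hu2, hv1])
        refine ⟨l, ⟨?_, ?_, ?_⟩, ?_⟩
        · rw [← Category.assoc, hl1, hu1]
        · rw [← Category.assoc, hl1, hu2]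
        · rw [← Category.assoc, hl2, hv2]
        · rintro y' ⟨hy1, hy2, hy3⟩
          apply hll
          constructor
          · apply huu
            constructor
            · rw [Category.assoc, hy1]
            · rw [Category.assoc, hy2]
          · apply hvv
            constructor
            · rw [Category.assoc, ← hT'.comm]; exact hy2
            · rw [Category.assoc, hy3]
    have hM' : SpanData.mk T E E (t1 ≫ a1) (t2 ≫ b2) ∈ M :=
      hKP (SpanData.mk E A Cc p1 p2) hM (t1 ≫ a1) (t1 ≫ a2) (t2 ≫ b2) hT
    -- the three triple maps
    obtain ⟨β', ⟨hβ1, hβ2, hβ3⟩, hβu⟩ :=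
      hT.univ (q1 ≫ e1) (q1 ≫ e1) (q1 ≫ e1) rfl rfl
    obtain ⟨γ', ⟨hγ1, hγ2, hγ3⟩, -⟩ :=
      hT.univ e1 e1 (f ≫ q1 ≫ e1) rfl
        (by simp only [Category.assoc, hq12, hf2])
    obtain ⟨α', ⟨hα1, hα2, hα3⟩, -⟩ :=
      hT.univ (g ≫ q1 ≫ e1) e2 e2
        (by simp only [Category.assoc, reassoc_of% hq12,
              reassoc_of% hq21, hq21]
            rw [← Category.assoc, ← Category.assoc, Category.assoc, h11,
              Category.comp_id, hg1]) rfl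
    -- the directed kite
    have h3 : q2 ≫ α' = β' := by
      apply hβu
      refine ⟨?_, ?_, ?_⟩
      · simp only [Category.assoc, hα1, reassoc_of% hq2g]
      · rw [Category.assoc, hα2]; exact hq.symm
      · rw [Category.assoc, hα3]; exact hq.symm
    have h4 : q1 ≫ γ' = β' := by
      apply hβu
      refine ⟨?_, ?_, ?_⟩
      · rw [Category.assoc, hγ1]
      · rw [Category.assoc, hγ2]
      · simp only [Category.assoc, hγ3, reassoc_of% hq1f]
    have h5 : α' ≫ (t1 ≫ a1) = g ≫ β' ≫ (t1 ≫ a1) := by rw [hα1, hβ1]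
    have h6 : f ≫ β' ≫ (t2 ≫ b2) = γ' ≫ (t2 ≫ b2) := by rw [hβ3, hγ3]
    have hKite : DiKite.IsKite
        (⟨Cc, Q, A, T, E, E, g, q2, f, q1, α', β', γ', t1 ≫ a1, t2 ≫ b2⟩ :
          DiKite C) :=
      ⟨hq2g, hq1f, h3, h4, h5, h6⟩
    have hMem : (DiKite.spanPart
        (⟨Cc, Q, A, T, E, E, g, q2, f, q1, α', β', γ', t1 ≫ a1, t2 ≫ b2⟩ :
          DiKite C)) ∈ M := hM'
    -- the pullback of f and g
    obtain ⟨P, π1, π2, hP⟩ := hPb f q1 g q2 hq1f hq2g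
    obtain ⟨m, hm, -⟩ :=
      hAdm ⟨Cc, Q, A, T, E, E, g, q2, f, q1, α', β', γ', t1 ≫ a1, t2 ≫ b2⟩
        hKite hMem π2 π1 (isPb_swap hP)
    have hmd : m ≫ t1 ≫ a1 = π1 ≫ γ' ≫ (t1 ≫ a1) := hm.2.2.1
    have hmc : m ≫ t2 ≫ b2 = π2 ≫ α' ≫ (t2 ≫ b2) := hm.2.2.2
    have hmdom : m ≫ t1 ≫ a1 = π1 ≫ e1 := by rw [hmd, hγ1]
    have hmcod : m ≫ t2 ≫ b2 = π2 ≫ e2 := by rw [hmc, hα3]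
    have hφ1 : m ≫ t1 ≫ a2 ≫ p1 = π1 := by
      rw [← hK1.comm, ← Category.assoc, ← Category.assoc]
      rw [Category.assoc m t1 a1, hmdom, Category.assoc, h11, Category.comp_id]
    have hφ2 : m ≫ t1 ≫ a2 ≫ p2 = π2 := by
      rw [reassoc_of% hT'.comm, hK2.comm, ← Category.assoc, ← Category.assoc]
      rw [Category.assoc m t2 b2, hmcod, Category.assoc, h22, Category.comp_id]
    refine ⟨Q, f, q1, g, q2, hq1f, hq2g, ⟨hfg, ?_⟩, h11, hf2.symm, hg1.symm, h22⟩
    intro Z a b hab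
    obtain ⟨l, ⟨hl1, hl2⟩, -⟩ := hP.univ a b hab
    have hc1 : (l ≫ m ≫ t1 ≫ a2) ≫ p1 = a := by
      simp only [Category.assoc, hφ1]; exact hl1
    have hc2 : (l ≫ m ≫ t1 ≫ a2) ≫ p2 = b := by
      simp only [Category.assoc, hφ2]; exact hl2
    refine ⟨l ≫ m ≫ t1 ≫ a2, ⟨hc1, hc2⟩, ?_⟩
    rintro y ⟨hy1, hy2⟩
    exact jm y _ (hy1.trans hc1.symm) (hy2.trans hc2.symm)
end

section
/- Let C be a category with pullbacks of split epimorphisms along split epimorphisms, and let M be a class of spans closed under the kernel pair construction and containing the span part of every local product; assume every directed kite whose direction lies in M is admissible, so that every span in M carries the canonical natural pregroupoid structure p. Let (D, d, c) ∈ M be a span such that the products D0×D0 and D1×D1 exist and such that both the span (D(d,c), dom, cod) and the span (D(d,c), ⟨d∘dom, d∘cod⟩, ⟨c∘dom, c∘cod⟩) belong to M. Then p satisfies the interchange law: for every object Z and all morphisms x1, y1, z1, x2, y2, z2, x3, y3, z3 : Z → D satisfying d∘x1 = d∘x2, c∘x2 = c∘x3, d∘y1 = d∘y2, c∘y2 =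 c∘y3, d∘z1 = d∘z2, c∘z2 = c∘z3, d∘x1 = d∘y1, c∘y1 = c∘z1, d∘x2 = d∘y2, c∘y2 = c∘z2, d∘x3 = d∘y3 and c∘y3 = c∘z3, one has p⟨p⟨x1,x2,x3⟩, p⟨y1,y2,y3⟩, p⟨z1,z2,z3⟩⟩ = p⟨p⟨x1,y1,z1⟩, p⟨x2,y2,z2⟩, p⟨x3,y3,z3⟩⟩. -/
open CategoryTheory

universe v u

/-- `(P, pr1, pr2)` is a binary product of `X` and `Y`. -/
def IsBinProd {C : Type u} [Category.{v} C] {X Y P : C}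
    (pr1 : P ⟶ X) (pr2 : P ⟶ Y) : Prop :=
  ∀ {Z : C} (a : Z ⟶ X) (b : Z ⟶ Y), ∃! l : Z ⟶ P, l ≫ pr1 = a ∧ l ≫ pr2 = b

/-- Congruence for the `p` operation of a pregroupoid structure. -/
theorem p_congr' {C : Type u} [Category.{v} C] {D D0 D1 : C} {d : D ⟶ D0} {c : D ⟶ D1}
    (P : PregroupoidStr d c) {Z : C} {x x' y y' z z' : Z ⟶ D}
    (hx : x = x') (hy : y = y') (hz : z = z')
    {hd : x ≫ d = y ≫ d} {hc : y ≫ c = z ≫ c}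
    {hd' : x' ≫ d = y' ≫ d} {hc' : y' ≫ c = z' ≫ c} :
    P.p x y z hd hc = P.p x' y' z' hd' hc' := by
  subst hx; subst hy; subst hz; rfl

theorem statement18 {C : Type u} [Category.{v} C] (hPb : HasPbSplit C)
    (M : Set (SpanData C)) (hKP : ClosedUnderKP M) (hLP : ContainsLocalProducts M)
    (hAdm : ∀ K : DiKite C, K.IsKite → K.spanPart ∈ M → K.Admissible)
    (PFam : ∀ S : SpanData C, S ∈ M → PregroupoidStr S.d S.c)
    (hNat : ∀ (S : SpanData C) (hS : S ∈ M) (S' : SpanData C) (hS' : S' ∈ M)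
      (f : S.D ⟶ S'.D) (f0 : S.D0 ⟶ S'.D0) (f1 : S.D1 ⟶ S'.D1),
      S.d ≫ f0 = f ≫ S'.d → S.c ≫ f1 = f ≫ S'.c →
      ∀ {Z : C} (x y z : Z ⟶ S.D) (hd : x ≫ S.d = y ≫ S.d) (hc : y ≫ S.c = z ≫ S.c)
        (hd' : (x ≫ f) ≫ S'.d = (y ≫ f) ≫ S'.d) (hc' : (y ≫ f) ≫ S'.c = (z ≫ f) ≫ S'.c),
        (PFam S hS).p x y z hd hc ≫ f = (PFam S' hS').p (x ≫ f) (y ≫ f) (z ≫ f) hd' hc')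
    {D D0 D1 : C} (d : D ⟶ D0) (c : D ⟶ D1) (hS : SpanData.mk D D0 D1 d c ∈ M)
    {Q0 Q1 : C} (pr01 pr02 : Q0 ⟶ D0) (pr11 pr12 : Q1 ⟶ D1)
    (hQ0 : IsBinProd pr01 pr02) (hQ1 : IsBinProd pr11 pr12)
    {T : C} (dom mid cod : T ⟶ D) (hT : IsTripleObj d c dom mid cod)
    (hTM : SpanData.mk T D D dom cod ∈ M)
    (δ : T ⟶ Q0) (hδ1 : δ ≫ pr01 = dom ≫ d) (hδ2 : δ ≫ pr02 = cod ≫ d)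
    (γ : T ⟶ Q1) (hγ1 : γ ≫ pr11 = dom ≫ c) (hγ2 : γ ≫ pr12 = cod ≫ c)
    (hTM2 : SpanData.mk T Q0 Q1 δ γ ∈ M) :
    ∀ {Z : C} (x1 y1 z1 x2 y2 z2 x3 y3 z3 : Z ⟶ D)
      (e1 : x1 ≫ d = x2 ≫ d) (e2 : x2 ≫ c = x3 ≫ c)
      (e3 : y1 ≫ d = y2 ≫ d) (e4 : y2 ≫ c = y3 ≫ c)
      (e5 : z1 ≫ d = z2 ≫ d) (e6 : z2 ≫ c = z3 ≫ c)
      (e7 : x1 ≫ d = y1 ≫ d) (e8 : y1 ≫ c = z1 ≫ c)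
      (e9 : x2 ≫ d = y2 ≫ d) (e10 : y2 ≫ c = z2 ≫ c)
      (e11 : x3 ≫ d = y3 ≫ d) (e12 : y3 ≫ c = z3 ≫ c)
      (H1 : ((PFam (SpanData.mk D D0 D1 d c) hS).p x1 x2 x3 e1 e2) ≫ d =
            ((PFam (SpanData.mk D D0 D1 d c) hS).p y1 y2 y3 e3 e4) ≫ d)
      (H2 : ((PFam (SpanData.mk D D0 D1 d c) hS).p y1 y2 y3 e3 e4) ≫ c =
            ((PFam (SpanData.mk D D0 D1 d c) hS).p z1 z2 z3 e5 e6) ≫ c)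
      (H3 : ((PFam (SpanData.mk D D0 D1 d c) hS).p x1 y1 z1 e7 e8) ≫ d =
            ((PFam (SpanData.mk D D0 D1 d c) hS).p x2 y2 z2 e9 e10) ≫ d)
      (H4 : ((PFam (SpanData.mk D D0 D1 d c) hS).p x2 y2 z2 e9 e10) ≫ c =
            ((PFam (SpanData.mk D D0 D1 d c) hS).p x3 y3 z3 e11 e12) ≫ c),
      (PFam (SpanData.mk D D0 D1 d c) hS).p
        ((PFam (SpanData.mk D D0 D1 d c) hS).p x1 x2 x3 e1 e2)
        ((PFam (SpanData.mk D D0 D1 d c) hS).p y1 y2 y3 e3 e4)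
        ((PFam (SpanData.mk D D0 D1 d c) hS).p z1 z2 z3 e5 e6) H1 H2 =
      (PFam (SpanData.mk D D0 D1 d c) hS).p
        ((PFam (SpanData.mk D D0 D1 d c) hS).p x1 y1 z1 e7 e8)
        ((PFam (SpanData.mk D D0 D1 d c) hS).p x2 y2 z2 e9 e10)
        ((PFam (SpanData.mk D D0 D1 d c) hS).p x3 y3 z3 e11 e12) H3 H4 := by
  intro Z x1 y1 z1 x2 y2 z2 x3 y3 z3 e1 e2 e3 e4 e5 e6 e7 e8 e9 e10 e11 e12 H1 H2 H3 H4
  set P : PregroupoidStr d c := PFam (SpanData.mk D D0 D1 d c) hS with hPdef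
  set P' : PregroupoidStr δ γ := PFam (SpanData.mk T Q0 Q1 δ γ) hTM2 with hP'def
  -- the three columns as maps into the triple object
  obtain ⟨K1, ⟨hK1d, hK1m, hK1c⟩, -⟩ := hT.univ x1 y1 z1 e7 e8
  obtain ⟨K2, ⟨hK2d, hK2m, hK2c⟩, -⟩ := hT.univ x2 y2 z2 e9 e10
  obtain ⟨K3, ⟨hK3d, hK3m, hK3c⟩, -⟩ := hT.univ x3 y3 z3 e11 e12
  have mono0 : ∀ {W : C} (u v : W ⟶ Q0), u ≫ pr01 = v ≫ pr01 → u ≫ pr02 = v ≫ pr02 →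
      u = v := by
    intro W u v h1 h2
    obtain ⟨l, -, hu⟩ := hQ0 (u ≫ pr01) (u ≫ pr02)
    exact (hu u ⟨rfl, rfl⟩).trans (hu v ⟨h1.symm, h2.symm⟩).symm
  have mono1 : ∀ {W : C} (u v : W ⟶ Q1), u ≫ pr11 = v ≫ pr11 → u ≫ pr12 = v ≫ pr12 →
      u = v := by
    intro W u v h1 h2
    obtain ⟨l, -, hu⟩ := hQ1 (u ≫ pr11) (u ≫ pr12)
    exact (hu u ⟨rfl, rfl⟩).trans (hu v ⟨h1.symm, h2.symm⟩).symm
  have hδδ : K1 ≫ δ = K2 ≫ δ := by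
    apply mono0
    · rw [Category.assoc, Category.assoc, hδ1, ← Category.assoc, ← Category.assoc,
        hK1d, hK2d]; exact e1
    · rw [Category.assoc, Category.assoc, hδ2, ← Category.assoc, ← Category.assoc,
        hK1c, hK2c]; exact e5
  have hγγ : K2 ≫ γ = K3 ≫ γ := by
    apply mono1
    · rw [Category.assoc, Category.assoc, hγ1, ← Category.assoc, ← Category.assoc,
        hK2d, hK3d]; exact e2
    · rw [Category.assoc, Category.assoc, hγ2, ← Category.assoc, ← Category.assoc,
        hK2c, hK3c]; exact e6
  set K : Z ⟶ T := P'.p K1 K2 K3 hδδ hγγ with hKdef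
  set μ : T ⟶ D := P.p dom mid cod hT.d_dom hT.c_mid with hμdef
  -- dom, mid, cod are span morphisms (T, δ, γ) → (D, d, c)
  have hmd : mid ≫ d = dom ≫ d := hT.d_dom.symm
  have hmc : mid ≫ c = cod ≫ c := hT.c_mid
  have hKd' : (K1 ≫ dom) ≫ d = (K2 ≫ dom) ≫ d := by rw [hK1d, hK2d]; exact e1
  have hKc' : (K2 ≫ dom) ≫ c = (K3 ≫ dom) ≫ c := by rw [hK2d, hK3d]; exact e2
  have hKdom : K ≫ dom = P.p x1 x2 x3 e1 e2 := by
    rw [hKdef, hNat (SpanData.mk T Q0 Q1 δ γ) hTM2 (SpanData.mk D D0 D1 d c) hS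
      dom pr01 pr11 hδ1 hγ1 K1 K2 K3 hδδ hγγ hKd' hKc']
    exact p_congr' P hK1d hK2d hK3d
  have hKmd' : (K1 ≫ mid) ≫ d = (K2 ≫ mid) ≫ d := by rw [hK1m, hK2m]; exact e3
  have hKmc' : (K2 ≫ mid) ≫ c = (K3 ≫ mid) ≫ c := by rw [hK2m, hK3m]; exact e4
  have hKmid : K ≫ mid = P.p y1 y2 y3 e3 e4 := by
    rw [hKdef, hNat (SpanData.mk T Q0 Q1 δ γ) hTM2 (SpanData.mk D D0 D1 d c) hS
      mid pr01 pr12 (hδ1.trans hT.d_dom) (hγ2.trans hT.c_mid.symm)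
      K1 K2 K3 hδδ hγγ hKmd' hKmc']
    exact p_congr' P hK1m hK2m hK3m
  have hKcd' : (K1 ≫ cod) ≫ d = (K2 ≫ cod) ≫ d := by rw [hK1c, hK2c]; exact e5
  have hKcc' : (K2 ≫ cod) ≫ c = (K3 ≫ cod) ≫ c := by rw [hK2c, hK3c]; exact e6
  have hKcod : K ≫ cod = P.p z1 z2 z3 e5 e6 := by
    rw [hKdef, hNat (SpanData.mk T Q0 Q1 δ γ) hTM2 (SpanData.mk D D0 D1 d c) hS
      cod pr02 pr12 hδ2 hγ2 K1 K2 K3 hδδ hγγ hKcd' hKcc']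
    exact p_congr' P hK1c hK2c hK3c
  -- LHS = K ≫ μ
  have hLd : (K ≫ dom) ≫ d = (K ≫ mid) ≫ d := by
    rw [Category.assoc, Category.assoc, hT.d_dom]
  have hLc : (K ≫ mid) ≫ c = (K ≫ cod) ≫ c := by
    rw [Category.assoc, Category.assoc, hT.c_mid]
  have hLHS : P.p (P.p x1 x2 x3 e1 e2) (P.p y1 y2 y3 e3 e4) (P.p z1 z2 z3 e5 e6) H1 H2
      = K ≫ μ := by
    rw [hμdef, ← P.natural K dom mid cod hT.d_dom hT.c_mid hLd hLc]
    exact p_congr' P hKdom.symm hKmid.symm hKcod.symm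
  -- μ is a span morphism (T, δ, γ) → (D, d, c)
  have hμd : δ ≫ pr02 = μ ≫ d := hδ2.trans (P.comp_d dom mid cod hT.d_dom hT.c_mid).symm
  have hμc : γ ≫ pr11 = μ ≫ c := hγ1.trans (P.comp_c dom mid cod hT.d_dom hT.c_mid).symm
  have hμ1 : K1 ≫ μ = P.p x1 y1 z1 e7 e8 := by
    have hd1 : (K1 ≫ dom) ≫ d = (K1 ≫ mid) ≫ d := by
      rw [Category.assoc, Category.assoc, hT.d_dom]
    have hc1 : (K1 ≫ mid) ≫ c = (K1 ≫ cod) ≫ c := by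
      rw [Category.assoc, Category.assoc, hT.c_mid]
    rw [hμdef, ← P.natural K1 dom mid cod hT.d_dom hT.c_mid hd1 hc1]
    exact p_congr' P hK1d hK1m hK1c
  have hμ2 : K2 ≫ μ = P.p x2 y2 z2 e9 e10 := by
    have hd1 : (K2 ≫ dom) ≫ d = (K2 ≫ mid) ≫ d := by
      rw [Category.assoc, Category.assoc, hT.d_dom]
    have hc1 : (K2 ≫ mid) ≫ c = (K2 ≫ cod) ≫ c := by
      rw [Category.assoc, Category.assoc, hT.c_mid]
    rw [hμdef, ← P.natural K2 dom mid cod hT.d_dom hT.c_mid hd1 hc1]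
    exact p_congr' P hK2d hK2m hK2c
  have hμ3 : K3 ≫ μ = P.p x3 y3 z3 e11 e12 := by
    have hd1 : (K3 ≫ dom) ≫ d = (K3 ≫ mid) ≫ d := by
      rw [Category.assoc, Category.assoc, hT.d_dom]
    have hc1 : (K3 ≫ mid) ≫ c = (K3 ≫ cod) ≫ c := by
      rw [Category.assoc, Category.assoc, hT.c_mid]
    rw [hμdef, ← P.natural K3 dom mid cod hT.d_dom hT.c_mid hd1 hc1]
    exact p_congr' P hK3d hK3m hK3c
  have hRd : (K1 ≫ μ) ≫ d = (K2 ≫ μ) ≫ d := by rw [hμ1, hμ2]; exact H3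
  have hRc : (K2 ≫ μ) ≫ c = (K3 ≫ μ) ≫ c := by rw [hμ2, hμ3]; exact H4
  have hRHS : K ≫ μ
      = P.p (P.p x1 y1 z1 e7 e8) (P.p x2 y2 z2 e9 e10) (P.p x3 y3 z3 e11 e12) H3 H4 := by
    rw [hKdef, hNat (SpanData.mk T Q0 Q1 δ γ) hTM2 (SpanData.mk D D0 D1 d c) hS
      μ pr02 pr11 hμd hμc K1 K2 K3 hδδ hγγ hRd hRc]
    exact p_congr' P hμ1 hμ2 hμ3
  exact hLHS.trans hRHS
end

section
/- Let C be a category and (D, d, c) a span (d : D → D0, c : D → D1) admitting both the kernel pair construction object D(d,c) and the box object D(□). Suppose there exists a morphism q : D(d,c) → D with d∘q = d∘cod and c∘q = c∘dom. Then the canonical morphism ⟨q1, q2, q3⟩ : D(□) → D(d,c) is a split epimorphism. Consequently, every morphism m : D(□) → D that is independent of its fourth variable (i.e. m∘u = m∘u' whenever q1∘u = q1∘u', q2∘u = q2∘u' and q3∘u = q3∘u') factors as m = p∘⟨q1, q2, q3⟩ for a unique p : D(d,c) → D; and if moreover m satisfies the pseudogroupoid identities d∘m∘⟨x,y,z,w⟩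 = d∘z, c∘m∘⟨x,y,z,w⟩ = c∘x, m∘⟨x,y,y,x⟩ = x and m∘⟨y,y,z,z⟩ = z for all generalized elements, then p is a pregroupoid structure on (D, d, c): d∘p∘⟨x,y,z⟩ = d∘z, c∘p∘⟨x,y,z⟩ = c∘x, p∘⟨x,y,y⟩ = x and p∘⟨y,y,z⟩ = z. -/
open CategoryTheory

universe v u

theorem statement19 {C : Type u} [Category.{v} C]
    {D D0 D1 : C} (d : D ⟶ D0) (c : D ⟶ D1)
    {T : C} (dom mid cod : T ⟶ D) (hT : IsTripleObj d c dom mid cod)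
    {Bx : C} (q1 q2 q3 q4 : Bx ⟶ D) (hBx : IsBoxObj d c q1 q2 q3 q4)
    (q : T ⟶ D) (hqd : q ≫ d = cod ≫ d) (hqc : q ≫ c = dom ≫ c)
    (τ : Bx ⟶ T) (hτ1 : τ ≫ dom = q1) (hτ2 : τ ≫ mid = q2) (hτ3 : τ ≫ cod = q3) :
    (∃ σ : T ⟶ Bx, σ ≫ τ = 𝟙 T) ∧
    (∀ m : Bx ⟶ D,
      (∀ {Z : C} (u u' : Z ⟶ Bx), u ≫ q1 = u' ≫ q1 → u ≫ q2 = u' ≫ q2 →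
        u ≫ q3 = u' ≫ q3 → u ≫ m = u' ≫ m) →
      (∃! p : T ⟶ D, τ ≫ p = m) ∧
      (((∀ {Z : C} (x y z w : Z ⟶ D) (l : Z ⟶ Bx),
          l ≫ q1 = x → l ≫ q2 = y → l ≫ q3 = z → l ≫ q4 = w →
          (l ≫ m) ≫ d = z ≫ d ∧ (l ≫ m) ≫ c = x ≫ c) ∧
        (∀ {Z : C} (x y : Z ⟶ D) (l : Z ⟶ Bx),
          l ≫ q1 = x → l ≫ q2 = y → l ≫ q3 = y → l ≫ q4 = x → l ≫ m = x) ∧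
        (∀ {Z : C} (y z : Z ⟶ D) (l : Z ⟶ Bx),
          l ≫ q1 = y → l ≫ q2 = y → l ≫ q3 = z → l ≫ q4 = z → l ≫ m = z)) →
        ∀ p : T ⟶ D, τ ≫ p = m →
          ((∀ {Z : C} (x y z : Z ⟶ D) (l : Z ⟶ T),
            l ≫ dom = x → l ≫ mid = y → l ≫ cod = z →
            (l ≫ p) ≫ d = z ≫ d ∧ (l ≫ p) ≫ c = x ≫ c) ∧
          (∀ {Z : C} (x y : Z ⟶ D) (l : Z ⟶ T),
            l ≫ dom = x → l ≫ mid = y → l ≫ cod = y → l ≫ p = x) ∧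
          (∀ {Z : C} (y z : Z ⟶ D) (l : Z ⟶ T),
            l ≫ dom = y → l ≫ mid = y → l ≫ cod = z → l ≫ p = z)))) := by

  obtain ⟨σ, ⟨hσ1, hσ2, hσ3, hσ4⟩, -⟩ :=
    hBx.univ dom mid cod q hT.d_dom hT.c_mid hqd.symm hqc
  have hστ : σ ≫ τ = 𝟙 T := by
    obtain ⟨l, -, hu⟩ := hT.univ dom mid cod hT.d_dom hT.c_mid
    have h1 := hu (σ ≫ τ) ⟨by rw [Category.assoc, hτ1, hσ1],
      by rw [Category.assoc, hτ2, hσ2], by rw [Category.assoc, hτ3, hσ3]⟩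
    have h2 := hu (𝟙 T) ⟨Category.id_comp _, Category.id_comp _, Category.id_comp _⟩
    rw [h1, h2]
  refine ⟨⟨σ, hστ⟩, fun m hindep => ?_⟩
  have hτσm : τ ≫ σ ≫ m = m := by
    have := hindep (τ ≫ σ) (𝟙 Bx)
      (by rw [Category.assoc, hσ1, hτ1, Category.id_comp])
      (by rw [Category.assoc, hσ2, hτ2, Category.id_comp])
      (by rw [Category.assoc, hσ3, hτ3, Category.id_comp])
    rwa [Category.id_comp, Category.assoc] at this
  have hpuniq : ∀ p : T ⟶ D, τ ≫ p = m → p = σ ≫ m := by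
    intro p hp
    have : σ ≫ τ ≫ p = σ ≫ m := by rw [hp]
    rwa [← Category.assoc, hστ, Category.id_comp] at this
  refine ⟨⟨σ ≫ m, hτσm, fun p hp => hpuniq p hp⟩, ?_⟩
  rintro ⟨hdc, hxyy, hyyz⟩ p hp
  have hpeq := hpuniq p hp
  subst hpeq
  refine ⟨?_, ?_, ?_⟩
  · intro Z x y z l h1 h2 h3
    have := hdc x y z (l ≫ σ ≫ q4) (l ≫ σ)
      (by rw [Category.assoc, hσ1, h1]) (by rw [Category.assoc, hσ2, h2])
      (by rw [Category.assoc, hσ3, h3]) (by rw [Category.assoc])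
    simpa [Category.assoc] using this
  · intro Z x y l h1 h2 h3
    -- x≫d = y≫d from triple relations
    have hxd : x ≫ d = y ≫ d := by
      rw [← h1, ← h2, Category.assoc, Category.assoc, hT.d_dom]
    obtain ⟨l', ⟨hl1, hl2, hl3, hl4⟩, -⟩ := hBx.univ x y y x hxd rfl hxd.symm rfl
    have heq := hindep (l ≫ σ) l'
      (by rw [Category.assoc, hσ1, h1, hl1])
      (by rw [Category.assoc, hσ2, h2, hl2])
      (by rw [Category.assoc, hσ3, h3, hl3])
    have := hxyy x y l' hl1 hl2 hl3 hl4
    rw [← Category.assoc, heq, this]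
  · intro Z y z l h1 h2 h3
    have hyc : y ≫ c = z ≫ c := by
      rw [← h2, ← h3, Category.assoc, Category.assoc, hT.c_mid]
    obtain ⟨l', ⟨hl1, hl2, hl3, hl4⟩, -⟩ := hBx.univ y y z z rfl hyc rfl hyc.symm
    have heq := hindep (l ≫ σ) l'
      (by rw [Category.assoc, hσ1, h1, hl1])
      (by rw [Category.assoc, hσ2, h2, hl2])
      (by rw [Category.assoc, hσ3, h3, hl3])
    have := hyyz y z l' hl1 hl2 hl3 hl4
    rw [← Category.assoc, heq, this]
end
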